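/- In the setting of the Bellman operator T (with δ ∈ (0,1), p ≥ 0, c ∈ ℝ, Φ⁺, Φ⁻ : [0,1] → [0,1], γ : [0,1]×[0,1] → [0,1]), assume additionally that Φ⁺ and Φ⁻ are monotone nondecreasing, that Φ⁻(λ) ≤ Φ⁺(λ) for every λ, and that λ ↦ γ(λ,θ) is monotone nondecreasing for each fixed θ ∈ [0,1]. Then T maps bounded nondecreasing functions V : [0,1] → ℝ to bounded nondecreasing functions, and the unique bounded fixed point of T is nondecreasing on [0,1]. -/

import Mathlib

/-- A function on beliefs is bounded. -/
def BddFn (V : Set.Icc (0:ℝ) 1 → ℝ) : Prop :=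
  ∃ M : ℝ, ∀ x, |V x| ≤ M

/-- The seller's Bellman operator:
(TV)(λ) = sup over θ ∈ [0,1] of
  { p·γ(λ,θ) − c·θ + δ·( γ(λ,θ)·V(Φ⁺(λ)) + (1−γ(λ,θ))·V(Φ⁻(λ)) ) }. -/
noncomputable def bellmanT (δ p c : ℝ)
    (Phip Phim : Set.Icc (0:ℝ) 1 → Set.Icc (0:ℝ) 1)
    (γ : Set.Icc (0:ℝ) 1 → Set.Icc (0:ℝ) 1 → ℝ)
    (V : Set.Icc (0:ℝ) 1 → ℝ) (x : Set.Icc (0:ℝ) 1) : ℝ :=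
  sSup (Set.range fun θ : Set.Icc (0:ℝ) 1 =>
    p * γ x θ - c * (θ : ℝ) +
      δ * (γ x θ * V (Phip x) + (1 - γ x θ) * V (Phim x)))

namespace Stmt4Aux

noncomputable def term (δ p c : ℝ)
    (Phip Phim : Set.Icc (0:ℝ) 1 → Set.Icc (0:ℝ) 1)
    (γ : Set.Icc (0:ℝ) 1 → Set.Icc (0:ℝ) 1 → ℝ)
    (V : Set.Icc (0:ℝ) 1 → ℝ) (x θ : Set.Icc (0:ℝ) 1) : ℝ :=
  p * γ x θ - c * (θ : ℝ) + δ * (γ x θ * V (Phip x) + (1 - γ x θ) * V (Phim x))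

def z01 : Set.Icc (0:ℝ) 1 := ⟨0, by norm_num⟩

theorem bellmanT_eq (δ p c : ℝ) (Phip Phim : Set.Icc (0:ℝ) 1 → Set.Icc (0:ℝ) 1)
    (γ : Set.Icc (0:ℝ) 1 → Set.Icc (0:ℝ) 1 → ℝ) (V : Set.Icc (0:ℝ) 1 → ℝ)
    (x : Set.Icc (0:ℝ) 1) :
    bellmanT δ p c Phip Phim γ V x = sSup (Set.range (term δ p c Phip Phim γ V x)) := rfl

section
variable {δ p c : ℝ} {Phip Phim : Set.Icc (0:ℝ) 1 → Set.Icc (0:ℝ) 1}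
  {γ : Set.Icc (0:ℝ) 1 → Set.Icc (0:ℝ) 1 → ℝ}

theorem range_ne (V : Set.Icc (0:ℝ) 1 → ℝ) (x : Set.Icc (0:ℝ) 1) :
    (Set.range (term δ p c Phip Phim γ V x)).Nonempty :=
  ⟨term δ p c Phip Phim γ V x z01, ⟨z01, rfl⟩⟩

theorem term_abs_le (hδ0 : 0 ≤ δ) (hp : 0 ≤ p)
    (hγ : ∀ x θ, γ x θ ∈ Set.Icc (0:ℝ) 1)
    {V : Set.Icc (0:ℝ) 1 → ℝ} {M : ℝ} (hM : ∀ x, |V x| ≤ M)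
    (x θ : Set.Icc (0:ℝ) 1) :
    |term δ p c Phip Phim γ V x θ| ≤ p + |c| + δ * M := by
  obtain ⟨hg0, hg1⟩ := hγ x θ
  obtain ⟨hθ0, hθ1⟩ := θ.2
  obtain ⟨ha0, ha1⟩ := abs_le.mp (hM (Phip x))
  obtain ⟨hb0, hb1⟩ := abs_le.mp (hM (Phim x))
  have hc1 := le_abs_self c
  have hc2 := neg_abs_le c
  have hc0 := abs_nonneg c
  rw [abs_le]
  unfold term
  constructor
  · nlinarith [mul_nonneg hp hg0,
      mul_nonneg hδ0 (mul_nonneg hg0 (by linarith : (0:ℝ) ≤ V (Phip x) + M)),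
      mul_nonneg hδ0 (mul_nonneg (by linarith : (0:ℝ) ≤ 1 - γ x θ) (by linarith : (0:ℝ) ≤ V (Phim x) + M)),
      mul_nonneg (by linarith : (0:ℝ) ≤ |c| - c) hθ0,
      mul_nonneg hc0 (by linarith : (0:ℝ) ≤ 1 - (θ:ℝ))]
  · nlinarith [mul_nonneg hp (by linarith : (0:ℝ) ≤ 1 - γ x θ),
      mul_nonneg hδ0 (mul_nonneg hg0 (by linarith : (0:ℝ) ≤ M - V (Phip x))),
      mul_nonneg hδ0 (mul_nonneg (by linarith : (0:ℝ) ≤ 1 - γ x θ) (by linarith : (0:ℝ) ≤ M - V (Phim x))),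
      mul_nonneg (by linarith : (0:ℝ) ≤ |c| + c) hθ0,
      mul_nonneg hc0 (by linarith : (0:ℝ) ≤ 1 - (θ:ℝ))]

theorem range_bddAbove (hδ0 : 0 ≤ δ) (hp : 0 ≤ p)
    (hγ : ∀ x θ, γ x θ ∈ Set.Icc (0:ℝ) 1)
    {V : Set.Icc (0:ℝ) 1 → ℝ} {M : ℝ} (hM : ∀ x, |V x| ≤ M)
    (x : Set.Icc (0:ℝ) 1) :
    BddAbove (Set.range (term δ p c Phip Phim γ V x)) := by
  refine ⟨p + |c| + δ * M, ?_⟩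
  rintro _ ⟨θ, rfl⟩
  exact (abs_le.mp (term_abs_le hδ0 hp hγ hM x θ)).2

theorem T_abs_le (hδ0 : 0 ≤ δ) (hp : 0 ≤ p)
    (hγ : ∀ x θ, γ x θ ∈ Set.Icc (0:ℝ) 1)
    {V : Set.Icc (0:ℝ) 1 → ℝ} {M : ℝ} (hM : ∀ x, |V x| ≤ M)
    (x : Set.Icc (0:ℝ) 1) :
    |bellmanT δ p c Phip Phim γ V x| ≤ p + |c| + δ * M := by
  rw [bellmanT_eq, abs_le]
  constructor
  · calc -(p + |c| + δ * M) ≤ term δ p c Phip Phim γ V x z01 :=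
          (abs_le.mp (term_abs_le hδ0 hp hγ hM x z01)).1
      _ ≤ _ := le_csSup (range_bddAbove hδ0 hp hγ hM x) ⟨z01, rfl⟩
  · exact csSup_le (range_ne V x)
      (by rintro _ ⟨θ, rfl⟩; exact (abs_le.mp (term_abs_le hδ0 hp hγ hM x θ)).2)

theorem T_mono (hδ0 : 0 ≤ δ) (hp : 0 ≤ p)
    (hγ : ∀ x θ, γ x θ ∈ Set.Icc (0:ℝ) 1)
    (hle : ∀ x, Phim x ≤ Phip x)
    (hPhipMono : Monotone Phip) (hPhimMono : Monotone Phim)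
    (hγMono : ∀ θ, Monotone fun x => γ x θ)
    {V : Set.Icc (0:ℝ) 1 → ℝ} {M : ℝ} (hM : ∀ x, |V x| ≤ M) (hVmono : Monotone V) :
    Monotone (bellmanT δ p c Phip Phim γ V) := by
  intro x y hxy
  rw [bellmanT_eq, bellmanT_eq]
  apply csSup_le (range_ne V x)
  rintro _ ⟨θ, rfl⟩
  refine le_trans ?_ (le_csSup (range_bddAbove hδ0 hp hγ hM y) ⟨θ, rfl⟩)
  unfold term
  obtain ⟨hg10, hg11⟩ := hγ x θ
  obtain ⟨hg20, hg21⟩ := hγ y θ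
  have hgm : γ x θ ≤ γ y θ := hγMono θ hxy
  have ha : V (Phip x) ≤ V (Phip y) := hVmono (hPhipMono hxy)
  have hb : V (Phim x) ≤ V (Phim y) := hVmono (hPhimMono hxy)
  have hba : V (Phim y) ≤ V (Phip y) := hVmono (hle y)
  nlinarith [mul_nonneg hδ0 (mul_nonneg (by linarith : (0:ℝ) ≤ γ y θ - γ x θ) (by linarith : (0:ℝ) ≤ V (Phip y) - V (Phim y))),
    mul_nonneg hδ0 (mul_nonneg hg10 (by linarith : (0:ℝ) ≤ V (Phip y) - V (Phip x))),
    mul_nonneg hδ0 (mul_nonneg (by linarith : (0:ℝ) ≤ 1 - γ x θ) (by linarith : (0:ℝ) ≤ V (Phim y) - V (Phim x))),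
    mul_nonneg hp (by linarith : (0:ℝ) ≤ γ y θ - γ x θ)]

theorem T_contract (hδ0 : 0 ≤ δ) (hp : 0 ≤ p)
    (hγ : ∀ x θ, γ x θ ∈ Set.Icc (0:ℝ) 1)
    {V W : Set.Icc (0:ℝ) 1 → ℝ} {MW K : ℝ} (hMW : ∀ x, |W x| ≤ MW)
    (hK : ∀ x, |V x - W x| ≤ K) (x : Set.Icc (0:ℝ) 1) :
    bellmanT δ p c Phip Phim γ V x ≤ bellmanT δ p c Phip Phim γ W x + δ * K := by
  rw [bellmanT_eq, bellmanT_eq]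
  apply csSup_le (range_ne V x)
  rintro _ ⟨θ, rfl⟩
  have h1 : term δ p c Phip Phim γ V x θ ≤ term δ p c Phip Phim γ W x θ + δ * K := by
    unfold term
    obtain ⟨hg0, hg1⟩ := hγ x θ
    obtain ⟨ha0, ha1⟩ := abs_le.mp (hK (Phip x))
    obtain ⟨hb0, hb1⟩ := abs_le.mp (hK (Phim x))
    nlinarith [mul_nonneg hδ0 (mul_nonneg hg0 (by linarith : (0:ℝ) ≤ K - (V (Phip x) - W (Phip x)))),
      mul_nonneg hδ0 (mul_nonneg (by linarith : (0:ℝ) ≤ 1 - γ x θ) (by linarith : (0:ℝ) ≤ K - (V (Phim x) - W (Phim x))))]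
  exact h1.trans (add_le_add_left (le_csSup (range_bddAbove hδ0 hp hγ hMW x) ⟨θ, rfl⟩) _)

end
end Stmt4Aux

/-- If Φ⁺, Φ⁻ are nondecreasing, Φ⁻ ≤ Φ⁺ pointwise, and γ(·,θ) is
nondecreasing for each θ, then T maps bounded nondecreasing functions to bounded
nondecreasing functions, and the unique bounded fixed point of T is nondecreasing. -/
theorem stmt_4 (δ p c : ℝ) (hδ : δ ∈ Set.Ioo (0:ℝ) 1) (hp : 0 ≤ p)
    (Phip Phim : Set.Icc (0:ℝ) 1 → Set.Icc (0:ℝ) 1)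
    (γ : Set.Icc (0:ℝ) 1 → Set.Icc (0:ℝ) 1 → ℝ)
    (hγ : ∀ x θ, γ x θ ∈ Set.Icc (0:ℝ) 1)
    (hPhipMono : Monotone Phip) (hPhimMono : Monotone Phim)
    (hle : ∀ x, Phim x ≤ Phip x)
    (hγMono : ∀ θ, Monotone fun x => γ x θ) :
    (∀ V, BddFn V → Monotone V →
      BddFn (bellmanT δ p c Phip Phim γ V) ∧ Monotone (bellmanT δ p c Phip Phim γ V)) ∧
    (∀ V, BddFn V → bellmanT δ p c Phip Phim γ V = V → Monotone V) := by
  obtain ⟨hδ0, hδ1⟩ := hδ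
  constructor
  · rintro V ⟨M, hM⟩ hVmono
    exact ⟨⟨p + |c| + δ * M, fun x => Stmt4Aux.T_abs_le hδ0.le hp hγ hM x⟩,
      Stmt4Aux.T_mono hδ0.le hp hγ hle hPhipMono hPhimMono hγMono hM hVmono⟩
  · rintro V ⟨M, hM⟩ hfix
    have hM0 : 0 ≤ M := le_trans (abs_nonneg _) (hM Stmt4Aux.z01)
    set T := bellmanT δ p c Phip Phim γ with hT
    set W : ℕ → (Set.Icc (0:ℝ) 1 → ℝ) := fun n => T^[n] (fun _ => 0) with hW
    have key : ∀ n, (∃ Mn, ∀ x, |W n x| ≤ Mn) ∧ Monotone (W n) ∧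
        ∀ x, |W n x - V x| ≤ δ ^ n * M := by
      intro n
      induction n with
      | zero =>
        refine ⟨⟨0, fun x => by simp [hW]⟩, monotone_const, fun x => ?_⟩
        simpa [hW] using hM x
      | succ n ih =>
        obtain ⟨⟨Mn, hMn⟩, hmono, hdist⟩ := ih
        have hWs : W (n + 1) = T (W n) := Function.iterate_succ_apply' T n _
        have hKnn : (0:ℝ) ≤ δ ^ n * M := mul_nonneg (pow_nonneg hδ0.le n) hM0
        refine ⟨⟨p + |c| + δ * Mn, fun x => by
            rw [hWs]; exact Stmt4Aux.T_abs_le hδ0.le hp hγ hMn x⟩,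
          by rw [hWs]; exact Stmt4Aux.T_mono hδ0.le hp hγ hle hPhipMono hPhimMono hγMono hMn hmono,
          fun x => ?_⟩
        have h1 : T (W n) x ≤ T V x + δ * (δ ^ n * M) :=
          Stmt4Aux.T_contract hδ0.le hp hγ hM hdist x
        have h2 : T V x ≤ T (W n) x + δ * (δ ^ n * M) :=
          Stmt4Aux.T_contract hδ0.le hp hγ hMn
            (fun y => by rw [abs_sub_comm]; exact hdist y) x
        have hfx : T V x = V x := congrFun hfix x
        rw [hWs, abs_le]
        constructor
        · nlinarith [h2, pow_succ δ n]
        · nlinarith [h1, pow_succ δ n]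
    intro x y hxy
    have hbnd : ∀ n : ℕ, V x ≤ V y + 2 * (δ ^ n * M) := by
      intro n
      obtain ⟨_, hmono, hdist⟩ := key n
      have h1 := abs_le.mp (hdist x)
      have h2 := abs_le.mp (hdist y)
      have h3 : W n x ≤ W n y := hmono hxy
      linarith
    have ht : Filter.Tendsto (fun n : ℕ => V y + 2 * (δ ^ n * M)) Filter.atTop
        (nhds (V y + 2 * (0 * M))) := by
      exact Filter.Tendsto.const_add _
        (((tendsto_pow_atTop_nhds_zero_of_lt_one hδ0.le hδ1).mul_const M).const_mul 2)
    have := ge_of_tendsto' ht hbnd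
    simpa using this
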